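/- arXiv:2006.04191 — 2 statements merged into one kernel-verified Lean document; each statement's English description precedes it below -/
import Mathlib

section
/- With $I = I_2(H)+I_2(V)$ the toric double determinantal ideal, the quotient ring $S = R/I$ is an integral domain. -/
/-
The ideal `I` is the kernel of the monomial map `x_{lij} ↦ a_l b_i c_j`, a ring homomorphism into a
domain, hence prime. The kernel of a monomial map is spanned by the binomials `x^u - x^w` whose
exponents have the same image, here the same three marginals. Two monomials with the same marginals
agree modulo `I`: the `2 × 2` minors of `H` and `V` allow exchanging the middle, resp. last, indices
of two factors, and two such exchanges move any factor of `x^w` into `x^u`, after which one cancels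
it and inducts on the degree.
-/

/-- The ideal generated by all 2×2 minors of a matrix. -/
def minors2 {R : Type*} [CommRing R] {α β : Type*} (M : Matrix α β R) : Ideal R :=
  Ideal.span { p | ∃ i i' j j', p = M i j * M i' j' - M i j' * M i' j }

namespace AddMonoidAlgebra

variable {R M N : Type*} [Ring R]

theorem sub_mapDomain_mem_span_single_sub_single {f : M → N} {g : M → M}
    (hg : ∀ a, f (g a) = f a) (x : AddMonoidAlgebra R M) :
    x - mapDomain g x ∈
      Submodule.span R {v | ∃ a b, f a = f b ∧ v = single a 1 - single b 1} := by
  induction x using induction_linear with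
  | zero => simp
  | add x y hx hy => rw [mapDomain_add, add_sub_add_comm]; exact add_mem hx hy
  | single a c =>
    rw [mapDomain_single, show single a c - single (g a) c = c • (single a 1 - single (g a) 1) by
      simp [smul_sub]]
    exact Submodule.smul_mem _ _ (Submodule.subset_span ⟨a, g a, (hg a).symm, rfl⟩)

theorem mem_span_single_sub_single_of_mapDomain_eq_zero {f : M → N} {x : AddMonoidAlgebra R M}
    (hx : mapDomain f x = 0) :
    x ∈ Submodule.span R {v | ∃ a b, f a = f b ∧ v = single a 1 - single b 1} := by
  rcases isEmpty_or_nonempty M with hM | hM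
  · rw [coeff_injective (Subsingleton.elim x.coeff 0)]; exact zero_mem _
  have hcomp : mapDomain (Function.invFun f ∘ f) x =
      mapDomain (Function.invFun f) (mapDomain f x) := by
    ext; simp [Finsupp.mapDomain_comp]
  have := sub_mapDomain_mem_span_single_sub_single (f := f) (g := Function.invFun f ∘ f)
    (fun a => Function.invFun_eq ⟨a, rfl⟩) x
  rwa [hcomp, hx, mapDomain_zero, sub_zero] at this

end AddMonoidAlgebra

namespace MvPolynomial

variable {R σ M : Type*}

theorem prod_map_X_toMultiset [CommSemiring R] (u : σ →₀ ℕ) :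
    (u.toMultiset.map X).prod = monomial u (1 : R) := by
  rw [Finsupp.toMultiset_map, Finsupp.prod_toMultiset,
    Finsupp.prod_mapDomain_index (by simp) (by simp [pow_add]), monomial_eq, C_1, one_mul]

variable [CommRing R] [AddMonoid M]

theorem ker_mapDomainRingHom_le {F : (σ →₀ ℕ) →+ M} {I : Ideal (MvPolynomial σ R)}
    (hI : ∀ u w, F u = F w → monomial u (1 : R) - monomial w 1 ∈ I) :
    RingHom.ker (AddMonoidAlgebra.mapDomainRingHom R F) ≤ I := by
  intro x hx
  refine (Submodule.span_le (p := I.restrictScalars R)).2 ?_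
    (AddMonoidAlgebra.mem_span_single_sub_single_of_mapDomain_eq_zero (RingHom.mem_ker.1 hx))
  rintro _ ⟨u, w, huw, rfl⟩
  simpa [single_eq_monomial] using hI u w huw

theorem X_mul_X_sub_X_mul_X_mem_ker_mapDomainRingHom {F : (σ →₀ ℕ) →+ M} {a b c d : σ}
    (h : F (Finsupp.single a 1) + F (Finsupp.single b 1) =
      F (Finsupp.single c 1) + F (Finsupp.single d 1)) :
    X a * X b - X c * X d ∈ RingHom.ker (AddMonoidAlgebra.mapDomainRingHom R F) := by
  rw [RingHom.mem_ker, map_sub, sub_eq_zero]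
  simp [X, ← single_eq_monomial, AddMonoidAlgebra.single_mul_single, h]

end MvPolynomial

namespace Multiset

variable {α β γ M : Type*} [CommMonoid M] {x : α × β × γ → M}

def marginals : Multiset (α × β × γ) →+ Multiset α × Multiset β × Multiset γ :=
  (mapAddMonoidHom Prod.fst).prod
    ((mapAddMonoidHom fun p => p.2.1).prod (mapAddMonoidHom fun p => p.2.2))

@[simp]
theorem marginals_apply (s : Multiset (α × β × γ)) :
    marginals s = (s.map Prod.fst, s.map (·.2.1), s.map (·.2.2)) := rfl

theorem exists_exchange {s : Multiset (α × β × γ)} {y z y' z' : α × β × γ} (hy : y ∈ s)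
    (hz : z ∈ s) (hyz : y ≠ z) (hx : x y * x z = x y' * x z')
    (hm : marginals {y, z} = marginals {y', z'}) :
    ∃ s', y' ∈ s' ∧ marginals s' = marginals s ∧ (s'.map x).prod = (s.map x).prod := by
  obtain ⟨c, rfl⟩ := exists_cons_of_mem hy
  obtain ⟨c, rfl⟩ := exists_cons_of_mem ((mem_cons.1 hz).resolve_left hyz.symm)
  have pair_add : ∀ a b, a ::ₘ b ::ₘ c = {a, b} + c := fun a b => by
    rw [insert_eq_cons, cons_add, singleton_add]
  refine ⟨y' ::ₘ z' ::ₘ c, mem_cons_self _ _, ?_, ?_⟩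
  · rw [pair_add, pair_add, _root_.map_add, _root_.map_add, hm]
  · simp only [map_cons, prod_cons, ← mul_assoc, hx]

theorem exists_mem_exchange_snd
    (hβ : ∀ l l' i i' j j', x (l, i, j) * x (l', i', j') = x (l, i', j) * x (l', i, j'))
    {s : Multiset (α × β × γ)} {y : α × β × γ} (hy : y ∈ s) {i : β} (hi : i ∈ s.map (·.2.1)) :
    ∃ s', (y.1, i, y.2.2) ∈ s' ∧ marginals s' = marginals s ∧ (s'.map x).prod = (s.map x).prod := by
  obtain ⟨z, hz, rfl⟩ := mem_map.1 hi
  by_cases h : y.2.1 = z.2.1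
  · exact ⟨s, by rw [← h]; exact hy, rfl, rfl⟩
  exact exists_exchange hy hz (by rintro rfl; exact h rfl) (hβ y.1 z.1 y.2.1 z.2.1 y.2.2 z.2.2)
    (by simpa using pair_comm y.2.1 z.2.1)

theorem exists_mem_exchange_thd
    (hγ : ∀ l l' i i' j j', x (l, i, j) * x (l', i', j') = x (l, i, j') * x (l', i', j))
    {s : Multiset (α × β × γ)} {y : α × β × γ} (hy : y ∈ s) {j : γ} (hj : j ∈ s.map (·.2.2)) :
    ∃ s', (y.1, y.2.1, j) ∈ s' ∧ marginals s' = marginals s ∧ (s'.map x).prod = (s.map x).prod := by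
  obtain ⟨z, hz, rfl⟩ := mem_map.1 hj
  by_cases h : y.2.2 = z.2.2
  · exact ⟨s, by rw [← h]; exact hy, rfl, rfl⟩
  exact exists_exchange hy hz (by rintro rfl; exact h rfl) (hγ y.1 z.1 y.2.1 z.2.1 y.2.2 z.2.2)
    (by simpa using pair_comm y.2.2 z.2.2)

theorem exists_mem_of_marginals_eq
    (hβ : ∀ l l' i i' j j', x (l, i, j) * x (l', i', j') = x (l, i', j) * x (l', i, j'))
    (hγ : ∀ l l' i i' j j', x (l, i, j) * x (l', i', j') = x (l, i, j') * x (l', i', j))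
    {s t : Multiset (α × β × γ)} (h : marginals s = marginals t) {a : α × β × γ} (ha : a ∈ t) :
    ∃ s', a ∈ s' ∧ marginals s' = marginals s ∧ (s'.map x).prod = (s.map x).prod := by
  simp only [marginals_apply, Prod.mk.injEq] at h
  obtain ⟨y, hy, hya⟩ := mem_map.1 (h.1 ▸ mem_map_of_mem Prod.fst ha)
  obtain ⟨s₁, hy₁, hs₁, hx₁⟩ := exists_mem_exchange_snd hβ hy (h.2.1 ▸ mem_map_of_mem _ ha)
  have hj : a.2.2 ∈ s₁.map (·.2.2) := by
    rw [show s₁.map (·.2.2) = s.map (·.2.2) from congrArg (·.2.2) hs₁, h.2.2]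
    exact mem_map_of_mem _ ha
  obtain ⟨s₂, hy₂, hs₂, hx₂⟩ := exists_mem_exchange_thd hγ hy₁ hj
  exact ⟨s₂, by simpa [hya] using hy₂, hs₂.trans hs₁, hx₂.trans hx₁⟩

theorem prod_map_eq_of_marginals_eq
    (hβ : ∀ l l' i i' j j', x (l, i, j) * x (l', i', j') = x (l, i', j) * x (l', i, j'))
    (hγ : ∀ l l' i i' j j', x (l, i, j) * x (l', i', j') = x (l, i, j') * x (l', i', j))
    {s t : Multiset (α × β × γ)} (h : marginals s = marginals t) :
    (s.map x).prod = (t.map x).prod := by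
  induction t using Multiset.induction_on generalizing s with
  | empty =>
    obtain rfl : s = 0 := by simpa using congrArg Prod.fst h
    rfl
  | cons a t ih =>
    obtain ⟨s', ha, hs', hx⟩ := exists_mem_of_marginals_eq hβ hγ h (mem_cons_self a t)
    obtain ⟨u, rfl⟩ := exists_cons_of_mem ha
    have hcancel : marginals ({a} + u) = marginals ({a} + t) := by
      rw [singleton_add, singleton_add, hs', h]
    rw [_root_.map_add, _root_.map_add] at hcancel
    rw [← hx, map_cons, map_cons, prod_cons, prod_cons, ih (add_left_cancel hcancel)]

end Multiset

namespace ToricDoubleDeterminantal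

open MvPolynomial

variable (k α β γ : Type*) [CommRing k]

noncomputable def horizontalConcat : Matrix β (α × γ) (MvPolynomial (α × β × γ) k) :=
  fun i q => X (q.1, i, q.2)

noncomputable def verticalConcat : Matrix (α × β) γ (MvPolynomial (α × β × γ) k) :=
  fun p j => X (p.1, p.2, j)

noncomputable def ideal : Ideal (MvPolynomial (α × β × γ) k) :=
  minors2 (horizontalConcat k α β γ) + minors2 (verticalConcat k α β γ)

/-- `AddMonoidAlgebra.mapDomainRingHom k (expMarginals α β γ)` is the monomial map
`x_{lij} ↦ a_l b_i c_j`, with target the monoid algebra of `(α →₀ ℕ) × (β →₀ ℕ) × (γ →₀ ℕ)`. -/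
noncomputable def expMarginals : ((α × β × γ) →₀ ℕ) →+ (α →₀ ℕ) × (β →₀ ℕ) × (γ →₀ ℕ) :=
  (Finsupp.mapDomain.addMonoidHom Prod.fst).prod
    ((Finsupp.mapDomain.addMonoidHom fun p => p.2.1).prod
      (Finsupp.mapDomain.addMonoidHom fun p => p.2.2))

variable {k α β γ}

theorem mk_X_mul_mk_X_exchange_snd (l l' : α) (i i' : β) (j j' : γ) :
    Ideal.Quotient.mk (ideal k α β γ) (X (l, i, j)) * Ideal.Quotient.mk _ (X (l', i', j')) =
      Ideal.Quotient.mk _ (X (l, i', j)) * Ideal.Quotient.mk _ (X (l', i, j')) := by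
  rw [← map_mul, ← map_mul, Ideal.Quotient.eq]
  refine Ideal.mem_sup_left (Ideal.subset_span ⟨i, i', (l, j), (l', j'), ?_⟩)
  simp only [horizontalConcat]
  ring

theorem mk_X_mul_mk_X_exchange_thd (l l' : α) (i i' : β) (j j' : γ) :
    Ideal.Quotient.mk (ideal k α β γ) (X (l, i, j)) * Ideal.Quotient.mk _ (X (l', i', j')) =
      Ideal.Quotient.mk _ (X (l, i, j')) * Ideal.Quotient.mk _ (X (l', i', j)) := by
  rw [← map_mul, ← map_mul, Ideal.Quotient.eq]
  exact Ideal.mem_sup_right (Ideal.subset_span ⟨(l, i), (l', i'), j, j', rfl⟩)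

theorem monomial_sub_monomial_mem_ideal {u w : (α × β × γ) →₀ ℕ}
    (h : expMarginals α β γ u = expMarginals α β γ w) :
    monomial u (1 : k) - monomial w 1 ∈ ideal k α β γ := by
  rw [← Ideal.Quotient.eq, ← prod_map_X_toMultiset, ← prod_map_X_toMultiset,
    map_multiset_prod, map_multiset_prod, Multiset.map_map, Multiset.map_map]
  refine Multiset.prod_map_eq_of_marginals_eq mk_X_mul_mk_X_exchange_snd
    mk_X_mul_mk_X_exchange_thd ?_
  simp only [expMarginals, AddMonoidHom.prod_apply, Finsupp.mapDomain.addMonoidHom_apply,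
    Prod.mk.injEq] at h
  simp only [Multiset.marginals_apply, Finsupp.toMultiset_map, h]

theorem ideal_le_ker :
    ideal k α β γ ≤ RingHom.ker (AddMonoidAlgebra.mapDomainRingHom k (expMarginals α β γ)) := by
  refine sup_le ?_ ?_ <;> refine Ideal.span_le.2 ?_ <;> rintro _ ⟨_, _, _, _, rfl⟩ <;>
    exact X_mul_X_sub_X_mul_X_mem_ker_mapDomainRingHom (by simp [expMarginals, add_comm])

theorem ideal_eq_ker :
    ideal k α β γ = RingHom.ker (AddMonoidAlgebra.mapDomainRingHom k (expMarginals α β γ)) :=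
  le_antisymm ideal_le_ker (ker_mapDomainRingHom_le fun _ _ => monomial_sub_monomial_mem_ideal)

theorem ideal_isPrime [IsDomain k] : (ideal k α β γ).IsPrime := by
  rw [ideal_eq_ker]
  exact RingHom.ker_isPrime _

end ToricDoubleDeterminantal

theorem toric_double_determinantal_quotient_isDomain_general (k : Type*) [Field k] (r m n : ℕ)
    (H : Matrix (Fin m) (Fin r × Fin n) (MvPolynomial (Fin r × Fin m × Fin n) k))
    (V : Matrix (Fin r × Fin m) (Fin n) (MvPolynomial (Fin r × Fin m × Fin n) k))
    (hH : ∀ i q, H i q = MvPolynomial.X (q.1, i, q.2))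
    (hV : ∀ p j, V p j = MvPolynomial.X (p.1, p.2, j)) :
    IsDomain (MvPolynomial (Fin r × Fin m × Fin n) k ⧸ (minors2 H + minors2 V)) := by
  obtain rfl : H = ToricDoubleDeterminantal.horizontalConcat k _ _ _ := Matrix.ext hH
  obtain rfl : V = ToricDoubleDeterminantal.verticalConcat k _ _ _ := Matrix.ext hV
  exact (Ideal.Quotient.isDomain_iff_prime _).2 ToricDoubleDeterminantal.ideal_isPrime

/-- With `I = I₂(H) + I₂(V)` the toric double determinantal ideal, the quotient
`S = R/I` is an integral domain. -/
theorem toric_double_determinantal_quotient_isDomain (k : Type*) [Field k] (r m n : ℕ)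
    (hr : 2 ≤ r) (hm : 2 ≤ m) (hn : 2 ≤ n)
    (H : Matrix (Fin m) (Fin r × Fin n) (MvPolynomial (Fin r × Fin m × Fin n) k))
    (V : Matrix (Fin r × Fin m) (Fin n) (MvPolynomial (Fin r × Fin m × Fin n) k))
    (hH : ∀ i q, H i q = MvPolynomial.X (q.1, i, q.2))
    (hV : ∀ p j, V p j = MvPolynomial.X (p.1, p.2, j)) :
    IsDomain (MvPolynomial (Fin r × Fin m × Fin n) k ⧸ (minors2 H + minors2 V)) :=
  toric_double_determinantal_quotient_isDomain_general k r m n H V hH hV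
end

section
/- Let $V$ be the vertical concatenation of two generic $m\times n$ matrices $X$ and $Y$, and let $b > 2$. Then every $b \times b$ minor of $V$ lies in the ideal $I_2(H)$ generated by the $2\times 2$ minors of the horizontal concatenation $H = [X \; Y]$. Consequently, $I_2(H) + I_b(V) = I_2(H)$. -/
/-- The ideal generated by all `b × b` minors of a matrix. -/
def minorsIdeal {R : Type*} [CommRing R] {α β : Type*} (b : ℕ) (M : Matrix α β R) :
    Ideal R :=
  Ideal.span { p | ∃ (rows : Fin b → α) (cols : Fin b → β),
    Function.Injective rows ∧ Function.Injective cols ∧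
      p = (M.submatrix rows cols).det }

/-!
Since `b > 2` while `V` has only two row blocks, two of the chosen rows of a `b × b` minor of `V`
come from the same block, say rows `i` and `i'` of `X` (or of `Y`). Restricted to the columns of
that block, these are rows `i` and `i'` of `H`, so all their `2 × 2` minors lie in `I₂(H)`. Modulo
`I₂(H)` the minor then has two rows with vanishing `2 × 2` minors, and such a determinant vanishes
over any commutative ring: composing the permutations with the transposition of the two rows
pairs off the terms of the Leibniz expansion with opposite signs and equal products.
-/

open Equiv

theorem Finset.prod_univ_eq_of_mul_eq_of_eq_off_pair {ι R : Type*} [Fintype ι] [DecidableEq ι]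
    [CommMonoid R] {f g : ι → R} {a a' : ι} (haa' : a ≠ a') (hpair : f a * f a' = g a * g a')
    (hrest : ∀ k, k ≠ a → k ≠ a' → f k = g k) : ∏ k, f k = ∏ k, g k := by
  have hsub : ({a, a'} : Finset ι) ⊆ Finset.univ := Finset.subset_univ _
  rw [← Finset.prod_sdiff hsub, ← Finset.prod_sdiff hsub, Finset.prod_pair haa',
    Finset.prod_pair haa', hpair]
  congr 1
  refine Finset.prod_congr rfl fun k hk => ?_
  simp only [Finset.mem_sdiff, Finset.mem_insert, Finset.mem_singleton, not_or] at hk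
  exact hrest k hk.2.1 hk.2.2

namespace Matrix

variable {n R : Type*} [Fintype n] [DecidableEq n] [CommRing R]

theorem prod_swap_mul_eq_of_rows_minors_eq (M : Matrix n n R) {i i' : n} (hii' : i ≠ i')
    (hminors : ∀ j j', M i j * M i' j' = M i j' * M i' j) (σ : Perm n) :
    ∏ k, M ((Equiv.swap i i' * σ) k) k = ∏ k, M (σ k) k := by
  have hσi : σ (σ.symm i) = i := σ.apply_symm_apply i
  have hσi' : σ (σ.symm i') = i' := σ.apply_symm_apply i'
  refine Finset.prod_univ_eq_of_mul_eq_of_eq_off_pair (σ.symm.injective.ne hii') ?_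
    fun k hk hk' => ?_
  · simp only [Perm.mul_apply, hσi, hσi', swap_apply_left, swap_apply_right]
    rw [hminors]
    ring
  · rw [Perm.mul_apply, swap_apply_of_ne_of_ne (fun h => hk (σ.eq_symm_apply.mpr h))
      (fun h => hk' (σ.eq_symm_apply.mpr h))]

theorem det_eq_zero_of_rows_minors_eq (M : Matrix n n R) {i i' : n} (hii' : i ≠ i')
    (hminors : ∀ j j', M i j * M i' j' = M i j' * M i' j) : M.det = 0 := by
  rw [det_apply']
  refine Finset.sum_ninvolution (fun σ => Equiv.swap i i' * σ) (fun σ => ?_) (fun σ _ hσ => ?_)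
    (fun _ => Finset.mem_univ _) (Equiv.swap_mul_self_mul i i')
  · rw [prod_swap_mul_eq_of_rows_minors_eq M hii' hminors, Perm.sign_mul, Perm.sign_swap hii']
    push_cast
    ring
  · have := congrArg (fun τ : Perm n => τ (σ.symm i)) hσ
    simp only [Perm.mul_apply, σ.apply_symm_apply, swap_apply_left] at this
    exact hii' this.symm

theorem det_mem_of_rows_minors_mem (M : Matrix n n R) (I : Ideal R) {i i' : n} (hii' : i ≠ i')
    (hminors : ∀ j j', M i j * M i' j' - M i j' * M i' j ∈ I) : M.det ∈ I := by
  rw [← Ideal.Quotient.eq_zero_iff_mem, RingHom.map_det]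
  refine det_eq_zero_of_rows_minors_eq _ hii' fun j j' => ?_
  simpa only [RingHom.mapMatrix_apply, map_apply, map_mul, map_sub, sub_eq_zero] using
    Ideal.Quotient.eq_zero_iff_mem.mpr (hminors j j')

end Matrix

theorem mul_sub_mul_mem_minors2 {R α β : Type*} [CommRing R] (M : Matrix α β R) (i i' : α)
    (j j' : β) :
    M i j * M i' j' - M i j' * M i' j ∈ minors2 M :=
  Ideal.subset_span ⟨i, i', j, j', rfl⟩

theorem minors_b_subset_minors2_H_general (k : Type*) [Field k] (m n b : ℕ)
    (hb : 2 < b)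
    (H : Matrix (Fin m) (Fin 2 × Fin n) (MvPolynomial (Fin 2 × Fin m × Fin n) k))
    (V : Matrix (Fin 2 × Fin m) (Fin n) (MvPolynomial (Fin 2 × Fin m × Fin n) k))
    (hH : ∀ i q, H i q = MvPolynomial.X (q.1, i, q.2))
    (hV : ∀ p j, V p j = MvPolynomial.X (p.1, p.2, j)) :
    (∀ (rows : Fin b → Fin 2 × Fin m) (cols : Fin b → Fin n),
      Function.Injective rows → Function.Injective cols →
        (V.submatrix rows cols).det ∈ minors2 H) ∧
      minors2 H + minorsIdeal b V = minors2 H := by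
  have hVH : ∀ p j, V p j = H p.2 (p.1, j) := fun p j => by rw [hV, hH]
  have hminor : ∀ (rows : Fin b → Fin 2 × Fin m) (cols : Fin b → Fin n),
      (V.submatrix rows cols).det ∈ minors2 H := by
    intro rows cols
    obtain ⟨x, x', hxx', hblock⟩ :=
      Fintype.exists_ne_map_eq_of_card_lt (fun t => (rows t).1) (by simpa using hb)
    refine Matrix.det_mem_of_rows_minors_mem _ _ hxx' fun j j' => ?_
    simp only [Matrix.submatrix_apply, hVH, hblock]
    exact mul_sub_mul_mem_minors2 H _ _ _ _
  refine ⟨fun rows cols _ _ => hminor rows cols, ?_⟩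
  rw [Ideal.add_eq_sup, sup_eq_left, minorsIdeal, Ideal.span_le]
  rintro p ⟨rows, cols, -, -, rfl⟩
  exact hminor rows cols

/-- For the vertical concatenation `V` of two generic `m × n` matrices and `b > 2`,
every `b × b` minor of `V` lies in the ideal of 2×2 minors of the horizontal
concatenation `H`; consequently `I₂(H) + I_b(V) = I₂(H)`. -/
theorem minors_b_subset_minors2_H (k : Type*) [Field k] (m n b : ℕ)
    (hm : 2 ≤ m) (hn : 2 ≤ n) (hb : 2 < b)
    (H : Matrix (Fin m) (Fin 2 × Fin n) (MvPolynomial (Fin 2 × Fin m × Fin n) k))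
    (V : Matrix (Fin 2 × Fin m) (Fin n) (MvPolynomial (Fin 2 × Fin m × Fin n) k))
    (hH : ∀ i q, H i q = MvPolynomial.X (q.1, i, q.2))
    (hV : ∀ p j, V p j = MvPolynomial.X (p.1, p.2, j)) :
    (∀ (rows : Fin b → Fin 2 × Fin m) (cols : Fin b → Fin n),
      Function.Injective rows → Function.Injective cols →
        (V.submatrix rows cols).det ∈ minors2 H) ∧
      minors2 H + minorsIdeal b V = minors2 H :=
  minors_b_subset_minors2_H_general k m n b hb H V hH hV
end
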